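/- Let p ∈ ℕ, ℓ > 0, J = [[0, I_p],[I_p, 0]]. Let β = [β₁ β₂] : [0,2ℓ] → ℂ^{p×2p} be differentiable with β(0) = (1/√2)[I_p I_p] and β′(x) J β(x)* = 0 for all x (so β(x)Jβ(x)* ≡ I_p and β₁, β₂ are pointwise invertible), and let γ : [0,2ℓ] → ℂ^{p×2p} be differentiable with γ(0) = (1/√2)[−I_p I_p], β(x) J γ(x)* = 0 and γ′(x) J γ(x)* = 0 for all x (so γ(x)Jγ(x)* ≡ −I_p). Define γ̃(x) = (1/2)[ −(β₂(x)*)^{-1} (β₁(x)*)^{-1} ]. Then γ̃(x) J γ̃(x)* is invertible for each x, the matrix function ϑ(x) := γ(x) J γ̃(x)* ( γ̃(x) J γ̃(x)* )^{-1} is differentiable and satisfies γ(x) = ϑ(x) γ̃(x) for all x, ϑ(0) = I_p, and ϑ′(x) = −ϑ(x)·( γ̃′(x) J γ̃(x)* )·( γ̃(x) J γ̃(x)* )^{-1} on [0,2ℓ]. -/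

import Mathlib

/-!
The forms `βJβ*` and `γJγ*` have zero derivative, so they keep their values `I` and `-I` at `0`.
Writing `β = [β₁ β₂]`, the identity `β₂β₁* + β₁β₂* = I` forces `β₁` and `β₂` to be invertible
(a kernel vector `v` of `β₁*` would give `v*v = 0`), and with `Y = β₂β₁*` it turns
`γ̃Jγ̃* = -¼(Y⁻¹ + Y⁻¹*)` into `-¼ Y⁻¹Y⁻¹*`, which is invertible. For `M = [β; γ̃]` one has
`MJM* = diag(I, γ̃Jγ̃*)`, so `M` is invertible, and expanding `γ = γ (JM* diag(I, (γ̃Jγ̃*)⁻¹)) M`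
with `γJβ* = 0` gives `γ = ϑγ̃`. The equation for `ϑ′` is the quotient rule simplified by
`γ′Jγ̃* = 0`, which follows from `γ′Jγ* = 0` because `ϑ` is invertible (`ϑ(γ̃Jγ̃*)ϑ* = -I`).
-/

open Matrix Set

variable {k l m n : Type*}

section EntrywiseDeriv

variable {𝕜 : Type*} [RCLike 𝕜] {s : Set ℝ} {x : ℝ}

def HasEntrywiseDerivWithinAt (A : ℝ → Matrix m n 𝕜) (A' : Matrix m n 𝕜) (s : Set ℝ) (x : ℝ) :
    Prop :=
  ∀ i j, HasDerivWithinAt (fun y => A y i j) (A' i j) s x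

namespace HasEntrywiseDerivWithinAt

lemma const (C : Matrix m n 𝕜) : HasEntrywiseDerivWithinAt (fun _ => C) 0 s x :=
  fun i j => hasDerivWithinAt_const x s (C i j)

variable {A : ℝ → Matrix m n 𝕜} {A' : Matrix m n 𝕜}

lemma neg (hA : HasEntrywiseDerivWithinAt A A' s x) :
    HasEntrywiseDerivWithinAt (fun y => -A y) (-A') s x :=
  fun i j => (hA i j).neg

lemma const_smul (c : 𝕜) (hA : HasEntrywiseDerivWithinAt A A' s x) :
    HasEntrywiseDerivWithinAt (fun y => c • A y) (c • A') s x :=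
  fun i j => (hA i j).const_mul c

lemma conjTranspose (hA : HasEntrywiseDerivWithinAt A A' s x) :
    HasEntrywiseDerivWithinAt (fun y => (A y)ᴴ) A'ᴴ s x :=
  fun i j => (hA j i).star

lemma toCols₁ {A : ℝ → Matrix m (n ⊕ l) 𝕜} {A' : Matrix m (n ⊕ l) 𝕜}
    (hA : HasEntrywiseDerivWithinAt A A' s x) :
    HasEntrywiseDerivWithinAt (fun y => (A y).toCols₁) A'.toCols₁ s x :=
  fun i j => hA i (Sum.inl j)

lemma toCols₂ {A : ℝ → Matrix m (n ⊕ l) 𝕜} {A' : Matrix m (n ⊕ l) 𝕜}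
    (hA : HasEntrywiseDerivWithinAt A A' s x) :
    HasEntrywiseDerivWithinAt (fun y => (A y).toCols₂) A'.toCols₂ s x :=
  fun i j => hA i (Sum.inr j)

lemma fromCols {B : ℝ → Matrix m l 𝕜} {B' : Matrix m l 𝕜}
    (hA : HasEntrywiseDerivWithinAt A A' s x) (hB : HasEntrywiseDerivWithinAt B B' s x) :
    HasEntrywiseDerivWithinAt (fun y => Matrix.fromCols (A y) (B y)) (Matrix.fromCols A' B') s x
  | i, Sum.inl j => hA i j
  | i, Sum.inr j => hB i j

lemma mul [Fintype n] {B : ℝ → Matrix n k 𝕜} {B' : Matrix n k 𝕜}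
    (hA : HasEntrywiseDerivWithinAt A A' s x) (hB : HasEntrywiseDerivWithinAt B B' s x) :
    HasEntrywiseDerivWithinAt (fun y => A y * B y) (A' * B x + A x * B') s x := by
  intro i j
  simpa only [mul_apply, Matrix.add_apply, Pi.mul_apply, ← Finset.sum_add_distrib] using
    HasDerivWithinAt.fun_sum fun c _ => (hA i c).mul (hB c j)

lemma mul_mul_conjTranspose [Fintype n] {B : ℝ → Matrix k n 𝕜} {B' : Matrix k n 𝕜}
    (J : Matrix n n 𝕜) (hA : HasEntrywiseDerivWithinAt A A' s x)
    (hB : HasEntrywiseDerivWithinAt B B' s x) :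
    HasEntrywiseDerivWithinAt (fun y => A y * J * (B y)ᴴ)
      (A' * J * (B x)ᴴ + A x * J * B'ᴴ) s x := by
  simpa using (hA.mul (const J)).mul hB.conjTranspose

lemma inv [Fintype n] [DecidableEq n] {M : ℝ → Matrix n n 𝕜} {M' : Matrix n n 𝕜}
    (hM : HasEntrywiseDerivWithinAt M M' s x) (hx : IsUnit (M x)) :
    HasEntrywiseDerivWithinAt (fun y => (M y)⁻¹) (-((M x)⁻¹ * M' * (M x)⁻¹)) s x := by
  -- any algebra norm does: it induces the product topology, where derivatives are entrywise
  let := Matrix.linftyOpNormedRing (n := n) (α := 𝕜)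
  let := Matrix.linftyOpNormedAlgebra (n := n) (R := ℝ) (α := 𝕜)
  obtain ⟨u, hu⟩ := hx
  have hM' : HasDerivWithinAt M M' s x :=
    hasDerivWithinAt_pi.2 fun i => hasDerivWithinAt_pi.2 (hM i)
  have hinv := (hu ▸ hasFDerivAt_ringInverse (𝕜 := ℝ) u).comp_hasDerivWithinAt x hM'
  simp only [Function.comp_def, ← nonsing_inv_eq_ringInverse, _root_.neg_apply,
    ContinuousLinearMap.mulLeftRight_apply, Matrix.coe_units_inv, hu] at hinv
  exact fun i => hasDerivWithinAt_pi.1 (hasDerivWithinAt_pi.1 hinv i)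

end HasEntrywiseDerivWithinAt

lemma constant_of_hasEntrywiseDerivWithinAt_zero {F : ℝ → Matrix m n 𝕜} {a b : ℝ}
    (hF : ∀ x ∈ Icc a b, HasEntrywiseDerivWithinAt F 0 (Icc a b) x) :
    ∀ x ∈ Icc a b, F x = F a := by
  intro x hx
  obtain rfl | hab := (hx.1.trans hx.2).eq_or_lt
  · rw [le_antisymm hx.2 hx.1]
  ext i j
  refine constant_of_derivWithin_zero (fun y hy => (hF y hy i j).differentiableWithinAt)
    (fun y hy => ?_) x hx
  exact (hF y (Ico_subset_Icc_self hy) i j).derivWithin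
    (uniqueDiffOn_Icc hab y (Ico_subset_Icc_self hy))

end EntrywiseDeriv

@[simp]
lemma smul_fromCols {α R : Type*} [SMul α R] (c : α) (A₁ : Matrix m n R) (A₂ : Matrix m l R) :
    c • fromCols A₁ A₂ = fromCols (c • A₁) (c • A₂) := by
  ext i (j | j) <;> rfl

section Form

variable {R : Type*} [CommRing R] [StarRing R]

lemma conjTranspose_mul_mul_conjTranspose [Fintype n] {J : Matrix n n R} (hJ : J.IsHermitian)
    (A : Matrix m n R) (B : Matrix k n R) : (A * J * Bᴴ)ᴴ = B * J * Aᴴ := by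
  rw [conjTranspose_mul, conjTranspose_mul, conjTranspose_conjTranspose, hJ.eq, Matrix.mul_assoc]

lemma mul_mul_conjTranspose_eq_zero_comm [Fintype n] {J : Matrix n n R} (hJ : J.IsHermitian)
    {A : Matrix m n R} {B : Matrix k n R} (h : A * J * Bᴴ = 0) : B * J * Aᴴ = 0 := by
  rw [← conjTranspose_mul_mul_conjTranspose hJ, h, conjTranspose_zero]

lemma inv_add_conjTranspose_inv [Fintype n] [DecidableEq n] {Y : Matrix n n R} (hY : IsUnit Y)
    (h : Y + Yᴴ = 1) : Y⁻¹ + Y⁻¹ᴴ = Y⁻¹ * Y⁻¹ᴴ := by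
  have hdet := (isUnit_iff_isUnit_det Y).1 hY
  calc Y⁻¹ + Y⁻¹ᴴ = Y⁻¹ * (Y + Yᴴ) * Y⁻¹ᴴ := by
        rw [Matrix.mul_add, Matrix.add_mul, nonsing_inv_mul _ hdet, Matrix.one_mul,
          Matrix.mul_assoc, ← conjTranspose_mul, nonsing_inv_mul _ hdet, conjTranspose_one,
          Matrix.mul_one, add_comm]
    _ = Y⁻¹ * Y⁻¹ᴴ := by rw [h, Matrix.mul_one]

/-- The paper's `ϑ`: if `γ = ϑ δ`, multiplying by `J δ*` on the right gives `ϑ = γJδ*(δJδ*)⁻¹`. -/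
noncomputable def projCoeff [Fintype l] [Fintype n] [DecidableEq n] (J : Matrix l l R)
    (γ : Matrix k l R) (δ : Matrix n l R) : Matrix k n R :=
  γ * J * δᴴ * (δ * J * δᴴ)⁻¹

lemma projCoeff_self [Fintype n] [Fintype m] [DecidableEq m] {J : Matrix n n R}
    {γ : Matrix m n R} (hγ : IsUnit (γ * J * γᴴ)) : projCoeff J γ γ = 1 :=
  mul_nonsing_inv _ ((isUnit_iff_isUnit_det _).1 hγ)

lemma isUnit_projCoeff [Fintype n] [Fintype m] [DecidableEq m] {J : Matrix n n R}
    {γ δ : Matrix m n R} (h : γ = projCoeff J γ δ * δ) (hγ : IsUnit (γ * J * γᴴ)) :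
    IsUnit (projCoeff J γ δ) := by
  have e : γ * J * γᴴ = projCoeff J γ δ * (δ * J * γᴴ) := by
    rw [← Matrix.mul_assoc, ← Matrix.mul_assoc, ← h]
  rw [e, isUnit_iff_isUnit_det, det_mul] at hγ
  exact (isUnit_iff_isUnit_det _).2 (isUnit_of_mul_isUnit_left hγ)

lemma eq_projCoeff_mul [Fintype m] [Fintype n] [DecidableEq m] [DecidableEq n]
    {J : Matrix (m ⊕ n) (m ⊕ n) R} (hJ : J.IsHermitian)
    {β : Matrix m (m ⊕ n) R} {δ : Matrix n (m ⊕ n) R} {γ : Matrix k (m ⊕ n) R}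
    (hβ : β * J * βᴴ = 1) (hβδ : β * J * δᴴ = 0) (hδ : IsUnit (δ * J * δᴴ))
    (hγβ : γ * J * βᴴ = 0) :
    γ = projCoeff J γ δ * δ := by
  have hM : fromRows β δ * J * (fromRows β δ)ᴴ = fromBlocks 1 0 0 (δ * J * δᴴ) := by
    rw [fromRows_mul, conjTranspose_fromRows_eq_fromCols_conjTranspose, fromRows_mul_fromCols,
      hβ, hβδ, mul_mul_conjTranspose_eq_zero_comm hJ hβδ]
  set N := J * (fromRows β δ)ᴴ * fromBlocks 1 0 0 (δ * J * δᴴ)⁻¹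
  have hMN : fromRows β δ * N = 1 := by
    simp only [N, ← Matrix.mul_assoc, hM, fromBlocks_multiply,
      mul_nonsing_inv _ ((isUnit_iff_isUnit_det _).1 hδ)]
    simp [fromBlocks_one]
  have hNM : N * fromRows β δ = J * βᴴ * β + J * δᴴ * (δ * J * δᴴ)⁻¹ * δ := by
    simp [N, conjTranspose_fromRows_eq_fromCols_conjTranspose, fromCols_mul_fromBlocks,
      fromCols_mul_fromRows]
  calc γ = γ * (N * fromRows β δ) := by rw [mul_eq_one_comm.1 hMN, Matrix.mul_one]
    _ = γ * J * βᴴ * β + γ * J * δᴴ * (δ * J * δᴴ)⁻¹ * δ := by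
      simp only [hNM, Matrix.mul_add, Matrix.mul_assoc]
    _ = projCoeff J γ δ * δ := by rw [hγβ, Matrix.zero_mul, zero_add, projCoeff]

lemma isHermitian_swap [DecidableEq m] :
    (fromBlocks 0 1 1 0 : Matrix (m ⊕ m) (m ⊕ m) R).IsHermitian := by
  simp [IsHermitian, fromBlocks_conjTranspose]

variable [Fintype m] [DecidableEq m]

lemma mul_swap_mul_conjTranspose (β : Matrix k (m ⊕ m) R) (γ : Matrix l (m ⊕ m) R) :
    β * (fromBlocks 0 1 1 0 : Matrix (m ⊕ m) (m ⊕ m) R) * γᴴ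
      = β.toCols₂ * γ.toCols₁ᴴ + β.toCols₁ * γ.toCols₂ᴴ := by
  conv_lhs => rw [← fromCols_toCols β, ← fromCols_toCols γ]
  rw [fromCols_mul_fromBlocks, conjTranspose_fromCols_eq_fromRows_conjTranspose,
    fromCols_mul_fromRows]
  simp

lemma smul_fromCols_mul_swap_mul_conjTranspose (c : R) (A₁ A₂ : Matrix k m R)
    (B₁ B₂ : Matrix l m R) :
    c • fromCols A₁ A₂ * (fromBlocks 0 1 1 0 : Matrix (m ⊕ m) (m ⊕ m) R) * (c • fromCols B₁ B₂)ᴴ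
      = (c * star c) • (A₂ * B₁ᴴ + A₁ * B₂ᴴ) := by
  rw [mul_swap_mul_conjTranspose]
  simp [smul_smul, smul_add, mul_comm]

end Form

section Complement

variable {𝕜 : Type*} [RCLike 𝕜] [Fintype m] [DecidableEq m]

open scoped ComplexOrder in
lemma isUnit_of_mul_conjTranspose_add_mul_conjTranspose_eq_one {A B : Matrix m m 𝕜}
    (h : A * Bᴴ + B * Aᴴ = 1) : IsUnit A := by
  rw [← isUnit_conjTranspose, isUnit_iff_isUnit_det, isUnit_iff_ne_zero]
  intro hdet
  obtain ⟨v, hv, hAv⟩ := exists_mulVec_eq_zero_iff.2 hdet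
  refine hv (dotProduct_star_self_eq_zero.1 ?_)
  calc star v ⬝ᵥ v = star v ⬝ᵥ ((A * Bᴴ + B * Aᴴ) *ᵥ v) := by rw [h, one_mulVec]
    _ = star v ⬝ᵥ (A *ᵥ (Bᴴ *ᵥ v)) := by
      rw [add_mulVec, ← mulVec_mulVec, ← mulVec_mulVec, hAv, mulVec_zero, add_zero]
    _ = star (Aᴴ *ᵥ v) ⬝ᵥ (Bᴴ *ᵥ v) := by
      rw [dotProduct_mulVec, star_mulVec, conjTranspose_conjTranspose]
    _ = 0 := by rw [hAv, star_zero, zero_dotProduct]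

lemma isUnit_toCols_of_mul_swap_mul_conjTranspose_eq_one {β : Matrix m (m ⊕ m) 𝕜}
    (h : β * (fromBlocks 0 1 1 0 : Matrix (m ⊕ m) (m ⊕ m) 𝕜) * βᴴ = 1) :
    IsUnit β.toCols₁ ∧ IsUnit β.toCols₂ := by
  rw [mul_swap_mul_conjTranspose] at h
  exact ⟨isUnit_of_mul_conjTranspose_add_mul_conjTranspose_eq_one (by rwa [add_comm] at h),
    isUnit_of_mul_conjTranspose_add_mul_conjTranspose_eq_one h⟩

/-- The paper's `γ̃ = ½[-(β₂*)⁻¹ (β₁*)⁻¹]`. -/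
noncomputable def jComplement (β : Matrix m (m ⊕ m) 𝕜) : Matrix m (m ⊕ m) 𝕜 :=
  (1 / 2 : 𝕜) • fromCols (-(β.toCols₂ᴴ)⁻¹) (β.toCols₁ᴴ)⁻¹

lemma mul_swap_mul_conjTranspose_jComplement {β : Matrix m (m ⊕ m) 𝕜}
    (h₁ : IsUnit β.toCols₁) (h₂ : IsUnit β.toCols₂) :
    β * (fromBlocks 0 1 1 0 : Matrix (m ⊕ m) (m ⊕ m) 𝕜) * (jComplement β)ᴴ = 0 := by
  rw [mul_swap_mul_conjTranspose]
  simp [jComplement, conjTranspose_nonsing_inv,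
    mul_nonsing_inv _ ((isUnit_iff_isUnit_det _).1 h₁),
    mul_nonsing_inv _ ((isUnit_iff_isUnit_det _).1 h₂)]

lemma jComplement_mul_swap_mul_conjTranspose (β : Matrix m (m ⊕ m) 𝕜) :
    jComplement β * (fromBlocks 0 1 1 0 : Matrix (m ⊕ m) (m ⊕ m) 𝕜) * (jComplement β)ᴴ
      = -(1 / 4 : 𝕜) • ((β.toCols₂ * β.toCols₁ᴴ)⁻¹ + (β.toCols₂ * β.toCols₁ᴴ)⁻¹ᴴ) := by
  rw [mul_swap_mul_conjTranspose]
  simp [jComplement, conjTranspose_nonsing_inv, Matrix.mul_inv_rev, smul_smul]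
  norm_num

lemma isUnit_jComplement_mul_swap_mul_conjTranspose {β : Matrix m (m ⊕ m) 𝕜}
    (h : β * (fromBlocks 0 1 1 0 : Matrix (m ⊕ m) (m ⊕ m) 𝕜) * βᴴ = 1) :
    IsUnit (jComplement β * (fromBlocks 0 1 1 0 : Matrix (m ⊕ m) (m ⊕ m) 𝕜) *
      (jComplement β)ᴴ) := by
  obtain ⟨h₁, h₂⟩ := isUnit_toCols_of_mul_swap_mul_conjTranspose_eq_one h
  have hY : IsUnit (β.toCols₂ * β.toCols₁ᴴ) := h₂.mul ((isUnit_conjTranspose _).2 h₁)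
  have hY₁ : β.toCols₂ * β.toCols₁ᴴ + (β.toCols₂ * β.toCols₁ᴴ)ᴴ = 1 := by
    rwa [conjTranspose_mul, conjTranspose_conjTranspose, ← mul_swap_mul_conjTranspose]
  have hYinv := isUnit_nonsing_inv_iff.2 hY
  rw [jComplement_mul_swap_mul_conjTranspose, inv_add_conjTranspose_inv hY hY₁,
    isUnit_iff_isUnit_det, det_smul]
  exact ((isUnit_iff_ne_zero.2 (by norm_num)).pow _).mul
    ((isUnit_iff_isUnit_det _).1 (hYinv.mul ((isUnit_conjTranspose _).2 hYinv)))

lemma exists_hasEntrywiseDerivWithinAt_jComplement {s : Set ℝ} {x : ℝ}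
    {β : ℝ → Matrix m (m ⊕ m) 𝕜} {β' : Matrix m (m ⊕ m) 𝕜}
    (hβ : HasEntrywiseDerivWithinAt β β' s x) (h : IsUnit (β x).toCols₁ ∧ IsUnit (β x).toCols₂) :
    ∃ γ', HasEntrywiseDerivWithinAt (fun y => jComplement (β y)) γ' s x :=
  ⟨_, ((hβ.toCols₂.conjTranspose.inv ((isUnit_conjTranspose _).2 h.2)).neg.fromCols
    (hβ.toCols₁.conjTranspose.inv ((isUnit_conjTranspose _).2 h.1))).const_smul _⟩

lemma jComplement_smul_fromCols_one_one {c : 𝕜} (hc : c * star c = 2⁻¹) :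
    jComplement (c • fromCols (1 : Matrix m m 𝕜) 1) = c • fromCols (-1) 1 := by
  have hinv : ((starRingEnd 𝕜) c • (1 : Matrix m m 𝕜))⁻¹ = (2 * c) • 1 := by
    refine inv_eq_left_inv ?_
    rw [smul_mul_smul_comm, Matrix.mul_one, mul_assoc, show c * (starRingEnd 𝕜) c = 2⁻¹ from hc,
      mul_inv_cancel₀ two_ne_zero, one_smul]
  simp [jComplement, hinv, smul_smul]

end Complement

lemma ofReal_sqrt_two_inv_mul_star : ((√2 : ℝ) : ℂ)⁻¹ * star ((√2 : ℝ) : ℂ)⁻¹ = 2⁻¹ := by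
  rw [star_inv₀, Complex.star_def, Complex.conj_ofReal, ← mul_inv, ← Complex.ofReal_mul,
    Real.mul_self_sqrt zero_le_two, Complex.ofReal_ofNat]

section Derivative

variable {𝕜 : Type*} [RCLike 𝕜] [Fintype n] {s : Set ℝ} {x : ℝ}

lemma mul_mul_conjTranspose_eq_of_deriv_mul_mul_conjTranspose_eq_zero
    {J : Matrix n n 𝕜} (hJ : J.IsHermitian) {β β' : ℝ → Matrix m n 𝕜} {a b : ℝ}
    (hβ : ∀ x ∈ Icc a b, HasEntrywiseDerivWithinAt β (β' x) (Icc a b) x)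
    (hβ' : ∀ x ∈ Icc a b, β' x * J * (β x)ᴴ = 0) :
    ∀ x ∈ Icc a b, β x * J * (β x)ᴴ = β a * J * (β a)ᴴ :=
  constant_of_hasEntrywiseDerivWithinAt_zero fun x hx => by
    simpa [hβ' x hx, mul_mul_conjTranspose_eq_zero_comm hJ (hβ' x hx)] using
      (hβ x hx).mul_mul_conjTranspose J (hβ x hx)

lemma hasEntrywiseDerivWithinAt_projCoeff [Fintype m] [DecidableEq m] (J : Matrix n n 𝕜)
    {γ δ : ℝ → Matrix m n 𝕜} {γ' δ' : Matrix m n 𝕜}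
    (hγ : HasEntrywiseDerivWithinAt γ γ' s x) (hδ : HasEntrywiseDerivWithinAt δ δ' s x)
    (hG : IsUnit (δ x * J * (δ x)ᴴ)) (hdec : γ x = projCoeff J (γ x) (δ x) * δ x)
    (hγγ : IsUnit (γ x * J * (γ x)ᴴ)) (hγ' : γ' * J * (γ x)ᴴ = 0) :
    HasEntrywiseDerivWithinAt (fun y => projCoeff J (γ y) (δ y))
      (-(projCoeff J (γ x) (δ x) * (δ' * J * (δ x)ᴴ) * (δ x * J * (δ x)ᴴ)⁻¹)) s x := by
  set ϑ := projCoeff J (γ x) (δ x) with hϑ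
  have hγ'δ : γ' * J * (δ x)ᴴ = 0 := by
    refine ((isUnit_conjTranspose _).2 (isUnit_projCoeff hdec hγγ)).mul_left_eq_zero.1 ?_
    rw [Matrix.mul_assoc, ← conjTranspose_mul, ← hdec, hγ']
  have hγδ : γ x * J * (δ x)ᴴ = ϑ * (δ x * J * (δ x)ᴴ) := by
    rw [hϑ, projCoeff, nonsing_inv_mul_cancel_right _ _ ((isUnit_iff_isUnit_det _).1 hG)]
  have hγδ' : γ x * J * δ'ᴴ = ϑ * (δ x * J * δ'ᴴ) := by
    conv_lhs => rw [hdec]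
    simp only [Matrix.mul_assoc]
  show HasEntrywiseDerivWithinAt (fun y => γ y * J * (δ y)ᴴ * (δ y * J * (δ y)ᴴ)⁻¹) _ s x
  convert (hγ.mul_mul_conjTranspose J hδ).mul ((hδ.mul_mul_conjTranspose J hδ).inv hG) using 1
  rw [hγ'δ, zero_add, hγδ', hγδ]
  have hGdet := (isUnit_iff_isUnit_det _).1 hG
  generalize δ x * J * (δ x)ᴴ = G at hGdet ⊢
  simp only [Matrix.mul_neg, Matrix.mul_add, Matrix.add_mul, Matrix.mul_assoc,
    mul_nonsing_inv_cancel_left _ _ hGdet]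
  abel

end Derivative

theorem recover_gamma_from_beta_general
    (p : ℕ) (ℓ : ℝ)
    (J : Matrix (Fin p ⊕ Fin p) (Fin p ⊕ Fin p) ℂ)
    (hJ : J = Matrix.fromBlocks 0 1 1 0)
    (β β' γ γ' : ℝ → Matrix (Fin p) (Fin p ⊕ Fin p) ℂ)
    (hβdiff : ∀ x ∈ Set.Icc (0:ℝ) (2*ℓ), ∀ i k,
      HasDerivWithinAt (fun y => β y i k) (β' x i k) (Set.Icc (0:ℝ) (2*ℓ)) x)
    (hγdiff : ∀ x ∈ Set.Icc (0:ℝ) (2*ℓ), ∀ i k,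
      HasDerivWithinAt (fun y => γ y i k) (γ' x i k) (Set.Icc (0:ℝ) (2*ℓ)) x)
    (hβ0 : β 0 = (((Real.sqrt 2 : ℝ) : ℂ))⁻¹ • Matrix.fromCols 1 1)
    (hγ0 : γ 0 = (((Real.sqrt 2 : ℝ) : ℂ))⁻¹ • Matrix.fromCols (-1) 1)
    (hβJ : ∀ x ∈ Set.Icc (0:ℝ) (2*ℓ), β' x * J * (β x)ᴴ = 0)
    (hβγ : ∀ x ∈ Set.Icc (0:ℝ) (2*ℓ), β x * J * (γ x)ᴴ = 0)
    (hγJ : ∀ x ∈ Set.Icc (0:ℝ) (2*ℓ), γ' x * J * (γ x)ᴴ = 0)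
    (γt : ℝ → Matrix (Fin p) (Fin p ⊕ Fin p) ℂ)
    (hγt : ∀ x, γt x = (1/2 : ℂ) • Matrix.fromCols
      (-((((β x).submatrix id Sum.inr)ᴴ)⁻¹)) ((((β x).submatrix id Sum.inl)ᴴ)⁻¹))
    (ϑ : ℝ → Matrix (Fin p) (Fin p) ℂ)
    (hϑ : ∀ x, ϑ x = γ x * J * (γt x)ᴴ * (γt x * J * (γt x)ᴴ)⁻¹) :
    (∀ x ∈ Set.Icc (0:ℝ) (2*ℓ),
      β x * J * (β x)ᴴ = 1 ∧
      IsUnit ((β x).submatrix id Sum.inl) ∧ IsUnit ((β x).submatrix id Sum.inr) ∧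
      γ x * J * (γ x)ᴴ = -1 ∧
      IsUnit (γt x * J * (γt x)ᴴ) ∧
      γ x = ϑ x * γt x) ∧
    ϑ 0 = 1 ∧
    -- ϑ is differentiable and solves ϑ′ = -ϑ(γ̃′Jγ̃*)(γ̃Jγ̃*)⁻¹
    (∃ (γt' : ℝ → Matrix (Fin p) (Fin p ⊕ Fin p) ℂ) (ϑ' : ℝ → Matrix (Fin p) (Fin p) ℂ),
      (∀ x ∈ Set.Icc (0:ℝ) (2*ℓ), ∀ i k,
        HasDerivWithinAt (fun y => γt y i k) (γt' x i k) (Set.Icc (0:ℝ) (2*ℓ)) x) ∧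
      (∀ x ∈ Set.Icc (0:ℝ) (2*ℓ), ∀ i k,
        HasDerivWithinAt (fun y => ϑ y i k) (ϑ' x i k) (Set.Icc (0:ℝ) (2*ℓ)) x) ∧
      (∀ x ∈ Set.Icc (0:ℝ) (2*ℓ),
        ϑ' x = -(ϑ x * (γt' x * J * (γt x)ᴴ) * (γt x * J * (γt x)ᴴ)⁻¹))) := by
  obtain rfl : γt = fun x => jComplement (β x) := funext hγt
  obtain rfl : ϑ = fun x => projCoeff J (γ x) (jComplement (β x)) := funext hϑ
  have hJh : J.IsHermitian := hJ ▸ isHermitian_swap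
  have hβ00 : β 0 * J * (β 0)ᴴ = 1 := by
    rw [hβ0, hJ, smul_fromCols_mul_swap_mul_conjTranspose, ofReal_sqrt_two_inv_mul_star]
    simp [← two_smul ℂ]
  have hγ00 : γ 0 * J * (γ 0)ᴴ = -1 := by
    rw [hγ0, hJ, smul_fromCols_mul_swap_mul_conjTranspose, ofReal_sqrt_two_inv_mul_star]
    simp [← two_smul ℂ]
  have hββ : ∀ x ∈ Set.Icc (0:ℝ) (2*ℓ), β x * J * (β x)ᴴ = 1 := fun x hx =>
    (mul_mul_conjTranspose_eq_of_deriv_mul_mul_conjTranspose_eq_zero hJh hβdiff hβJ x hx).trans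
      hβ00
  have hγγ : ∀ x ∈ Set.Icc (0:ℝ) (2*ℓ), γ x * J * (γ x)ᴴ = -1 := fun x hx =>
    (mul_mul_conjTranspose_eq_of_deriv_mul_mul_conjTranspose_eq_zero hJh hγdiff hγJ x hx).trans
      hγ00
  have hunit := fun x hx => isUnit_toCols_of_mul_swap_mul_conjTranspose_eq_one (hJ ▸ hββ x hx)
  have hG : ∀ x ∈ Set.Icc (0:ℝ) (2*ℓ), IsUnit (jComplement (β x) * J * (jComplement (β x))ᴴ) :=
    fun x hx => hJ ▸ isUnit_jComplement_mul_swap_mul_conjTranspose (hJ ▸ hββ x hx)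
  have hdec : ∀ x ∈ Set.Icc (0:ℝ) (2*ℓ),
      γ x = projCoeff J (γ x) (jComplement (β x)) * jComplement (β x) :=
    fun x hx => eq_projCoeff_mul hJh (hββ x hx)
      (hJ ▸ mul_swap_mul_conjTranspose_jComplement (hunit x hx).1 (hunit x hx).2) (hG x hx)
      (mul_mul_conjTranspose_eq_zero_comm hJh (hβγ x hx))
  choose! γt' hγt' using fun x (hx : x ∈ Set.Icc (0:ℝ) (2*ℓ)) =>
    exists_hasEntrywiseDerivWithinAt_jComplement (hβdiff x hx) (hunit x hx)
  refine ⟨fun x hx => ⟨hββ x hx, (hunit x hx).1, (hunit x hx).2, hγγ x hx, hG x hx, hdec x hx⟩,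
    ?_, γt', _, hγt', fun x hx => hasEntrywiseDerivWithinAt_projCoeff _ (hγdiff x hx) (hγt' x hx)
      (hG x hx) (hdec x hx) (hγγ x hx ▸ isUnit_one.neg) (hγJ x hx),
    fun _ _ => rfl⟩
  show projCoeff J (γ 0) (jComplement (β 0)) = 1
  rw [hβ0, jComplement_smul_fromCols_one_one ofReal_sqrt_two_inv_mul_star, ← hγ0,
    projCoeff_self (hγ00 ▸ isUnit_one.neg)]

/-- **Proposition A.2 of the paper.**  Let `β` and `γ` on `[0,2ℓ]` be differentiable,
with `β(0) = (1/√2)[I_p I_p]`, `β′Jβ* ≡ 0` (so `βJβ* ≡ I_p`, `β₁, β₂` invertible),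
`γ(0) = (1/√2)[-I_p I_p]`, `βJγ* ≡ 0` and `γ′Jγ* ≡ 0` (so `γJγ* ≡ -I_p`).  With
`γ̃ = (1/2)[-(β₂*)⁻¹ (β₁*)⁻¹]`, the matrix `γ̃Jγ̃*` is invertible,
`ϑ := γJγ̃*(γ̃Jγ̃*)⁻¹` is differentiable and satisfies `γ = ϑγ̃`, `ϑ(0) = I_p`, and
`ϑ′ = -ϑ(γ̃′Jγ̃*)(γ̃Jγ̃*)⁻¹` on `[0,2ℓ]`. -/
theorem recover_gamma_from_beta
    (p : ℕ) (ℓ : ℝ) (hℓ : 0 < ℓ)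
    (J : Matrix (Fin p ⊕ Fin p) (Fin p ⊕ Fin p) ℂ)
    (hJ : J = Matrix.fromBlocks 0 1 1 0)
    (β β' γ γ' : ℝ → Matrix (Fin p) (Fin p ⊕ Fin p) ℂ)
    (hβdiff : ∀ x ∈ Set.Icc (0:ℝ) (2*ℓ), ∀ i k,
      HasDerivWithinAt (fun y => β y i k) (β' x i k) (Set.Icc (0:ℝ) (2*ℓ)) x)
    (hγdiff : ∀ x ∈ Set.Icc (0:ℝ) (2*ℓ), ∀ i k,
      HasDerivWithinAt (fun y => γ y i k) (γ' x i k) (Set.Icc (0:ℝ) (2*ℓ)) x)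
    (hβ0 : β 0 = (((Real.sqrt 2 : ℝ) : ℂ))⁻¹ • Matrix.fromCols 1 1)
    (hγ0 : γ 0 = (((Real.sqrt 2 : ℝ) : ℂ))⁻¹ • Matrix.fromCols (-1) 1)
    (hβJ : ∀ x ∈ Set.Icc (0:ℝ) (2*ℓ), β' x * J * (β x)ᴴ = 0)
    (hβγ : ∀ x ∈ Set.Icc (0:ℝ) (2*ℓ), β x * J * (γ x)ᴴ = 0)
    (hγJ : ∀ x ∈ Set.Icc (0:ℝ) (2*ℓ), γ' x * J * (γ x)ᴴ = 0)
    (γt : ℝ → Matrix (Fin p) (Fin p ⊕ Fin p) ℂ)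
    (hγt : ∀ x, γt x = (1/2 : ℂ) • Matrix.fromCols
      (-((((β x).submatrix id Sum.inr)ᴴ)⁻¹)) ((((β x).submatrix id Sum.inl)ᴴ)⁻¹))
    (ϑ : ℝ → Matrix (Fin p) (Fin p) ℂ)
    (hϑ : ∀ x, ϑ x = γ x * J * (γt x)ᴴ * (γt x * J * (γt x)ᴴ)⁻¹) :
    (∀ x ∈ Set.Icc (0:ℝ) (2*ℓ),
      β x * J * (β x)ᴴ = 1 ∧
      IsUnit ((β x).submatrix id Sum.inl) ∧ IsUnit ((β x).submatrix id Sum.inr) ∧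
      γ x * J * (γ x)ᴴ = -1 ∧
      IsUnit (γt x * J * (γt x)ᴴ) ∧
      γ x = ϑ x * γt x) ∧
    ϑ 0 = 1 ∧
    -- ϑ is differentiable and solves ϑ′ = -ϑ(γ̃′Jγ̃*)(γ̃Jγ̃*)⁻¹
    (∃ (γt' : ℝ → Matrix (Fin p) (Fin p ⊕ Fin p) ℂ) (ϑ' : ℝ → Matrix (Fin p) (Fin p) ℂ),
      (∀ x ∈ Set.Icc (0:ℝ) (2*ℓ), ∀ i k,
        HasDerivWithinAt (fun y => γt y i k) (γt' x i k) (Set.Icc (0:ℝ) (2*ℓ)) x) ∧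
      (∀ x ∈ Set.Icc (0:ℝ) (2*ℓ), ∀ i k,
        HasDerivWithinAt (fun y => ϑ y i k) (ϑ' x i k) (Set.Icc (0:ℝ) (2*ℓ)) x) ∧
      (∀ x ∈ Set.Icc (0:ℝ) (2*ℓ),
        ϑ' x = -(ϑ x * (γt' x * J * (γt x)ᴴ) * (γt x * J * (γt x)ᴴ)⁻¹))) :=
  recover_gamma_from_beta_general p ℓ J hJ β β' γ γ' hβdiff hγdiff hβ0 hγ0 hβJ hβγ hγJ γt hγt ϑ hϑ
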